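/- arXiv:0907.5397 — 3 statements merged into one kernel-verified Lean document; each statement's English description precedes it below -/
import Mathlib

section
/- Let d ≥ 1 and let T ⊆ ℝ^d be a nonempty bounded open set with frontier ∂T, and let c ∈ T be such that for every t in the closure of T and every λ ∈ (0,1], (1−λ)t + λc ∈ T. For λ ∈ [0,1] define the telescoping surface ∂T^λ = {(1−λ)θ + λc : θ ∈ ∂T}. Then the telescoping surfaces are pairwise disjoint: for all λ₁, λ₂ ∈ [0,1] with λ₁ ≠ λ₂, ∂T^{λ₁} ∩ ∂T^{λ₂} = ∅. -/
private lemma telescoping_aux (d : ℕ)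
    (T : Set (EuclideanSpace ℝ (Fin d))) (hopen : IsOpen T)
    (c : EuclideanSpace ℝ (Fin d))
    (hstar : ∀ t ∈ closure T, ∀ lam ∈ Set.Ioc (0 : ℝ) 1, (1 - lam) • t + lam • c ∈ T)
    (surf : ℝ → Set (EuclideanSpace ℝ (Fin d)))
    (hsurf : ∀ lam, surf lam = (fun θ => (1 - lam) • θ + lam • c) '' frontier T)
    (lam₁ lam₂ : ℝ) (h1 : lam₁ ∈ Set.Icc (0 : ℝ) 1) (h2 : lam₂ ∈ Set.Icc (0 : ℝ) 1)
    (hlt : lam₁ < lam₂) : surf lam₁ ∩ surf lam₂ = ∅ := by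
  rw [Set.eq_empty_iff_forall_notMem]
  rintro x ⟨hx1, hx2⟩
  rw [hsurf] at hx1 hx2
  obtain ⟨θ₁, hθ₁, e1⟩ := hx1
  obtain ⟨θ₂, hθ₂, e2⟩ := hx2
  have ha : (0 : ℝ) < 1 - lam₁ := by linarith [h2.2]
  set μ : ℝ := (lam₂ - lam₁) / (1 - lam₁) with hμ
  have hμpos : 0 < μ := div_pos (by linarith) ha
  have hμle : μ ≤ 1 := by
    rw [div_le_one ha]; linarith [h2.2]
  have key : θ₁ = (1 - μ) • θ₂ + μ • c := by
    apply smul_right_injective (EuclideanSpace ℝ (Fin d)) (ne_of_gt ha)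
    show (1 - lam₁) • θ₁ = (1 - lam₁) • ((1 - μ) • θ₂ + μ • c)
    have hmul1 : (1 - lam₁) * (1 - μ) = 1 - lam₂ := by
      rw [hμ]; field_simp; ring
    have hmul2 : (1 - lam₁) * μ = lam₂ - lam₁ := by
      rw [hμ]; field_simp
    have : (1 - lam₁) • θ₁ = (1 - lam₂) • θ₂ + (lam₂ - lam₁) • c := by
      have := e1.trans e2.symm
      have h := congrArg (fun y => y - lam₁ • c) this
      simp only [add_sub_cancel_right] at h
      rw [h, sub_smul]
      module
    rw [this, smul_add, smul_smul, smul_smul, hmul1, hmul2]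
  have hθ₁T : θ₁ ∈ T := by
    rw [key]
    exact hstar θ₂ (frontier_subset_closure hθ₂) μ ⟨hμpos, hμle⟩
  have : θ₁ ∉ T := by
    rw [hopen.frontier_eq] at hθ₁
    exact hθ₁.2
  exact this hθ₁T

/-- The similar telescoping surfaces `∂T^λ = (1-λ)∂T + λc` generated by the homotopy
`h(θ,λ) = (1-λ)θ + λc` are pairwise disjoint (the precise form of the nesting property P3). -/
theorem telescoping_surfaces_pairwise_disjoint (d : ℕ) (hd : 1 ≤ d)
    (T : Set (EuclideanSpace ℝ (Fin d))) (hne : T.Nonempty)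
    (hbdd : Bornology.IsBounded T) (hopen : IsOpen T)
    (c : EuclideanSpace ℝ (Fin d)) (hc : c ∈ T)
    (hstar : ∀ t ∈ closure T, ∀ lam ∈ Set.Ioc (0 : ℝ) 1, (1 - lam) • t + lam • c ∈ T)
    (surf : ℝ → Set (EuclideanSpace ℝ (Fin d)))
    (hsurf : ∀ lam, surf lam = (fun θ => (1 - lam) • θ + lam • c) '' frontier T) :
    ∀ lam₁ ∈ Set.Icc (0 : ℝ) 1, ∀ lam₂ ∈ Set.Icc (0 : ℝ) 1, lam₁ ≠ lam₂ →
      surf lam₁ ∩ surf lam₂ = ∅ := by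
  intro lam₁ h1 lam₂ h2 hne'
  rcases hne'.lt_or_gt with hlt | hlt
  · exact telescoping_aux d T hopen c hstar surf hsurf lam₁ lam₂ h1 h2 hlt
  · rw [Set.inter_comm]
    exact telescoping_aux d T hopen c hstar surf hsurf lam₂ lam₁ h2 h1 hlt
end

section
/- Let d ≥ 1 and let T ⊆ ℝ^d be a nonempty bounded open set with frontier ∂T, and let c ∈ T be such that for every t in the closure of T and every λ ∈ (0,1], (1−λ)t + λc ∈ T. For λ ∈ [0,1] define the telescoping surface ∂T^λ = {(1−λ)θ + λc : θ ∈ ∂T}. Then the union of all telescoping surfaces sweeps the whole domain: ⋃_{λ∈[0,1]} ∂T^λ equals the closure of T. -/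
/-- Property P4 of the similar telescoping surfaces `∂T^λ = (1-λ)∂T + λc` generated by the
homotopy `h(θ,λ) = (1-λ)θ + λc`: the surfaces sweep the whole domain, i.e. their union over
`λ ∈ [0,1]` is the closure of `T`. -/
theorem telescoping_surfaces_sweep (d : ℕ) (hd : 1 ≤ d)
    (T : Set (EuclideanSpace ℝ (Fin d))) (hne : T.Nonempty)
    (hbdd : Bornology.IsBounded T) (hopen : IsOpen T)
    (c : EuclideanSpace ℝ (Fin d)) (hc : c ∈ T)
    (hstar : ∀ t ∈ closure T, ∀ lam ∈ Set.Ioc (0 : ℝ) 1, (1 - lam) • t + lam • c ∈ T)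
    (surf : ℝ → Set (EuclideanSpace ℝ (Fin d)))
    (hsurf : ∀ lam, surf lam = (fun θ => (1 - lam) • θ + lam • c) '' frontier T) :
    ⋃ lam ∈ Set.Icc (0 : ℝ) 1, surf lam = closure T := by
  haveI : Nonempty (Fin d) := ⟨⟨0, hd⟩⟩
  haveI : Nontrivial (EuclideanSpace ℝ (Fin d)) := inferInstance
  -- frontier T is nonempty
  have hfr : (frontier T).Nonempty := by
    rw [Set.nonempty_iff_ne_empty]
    intro h
    rcases frontier_eq_empty_iff.mp h with h | h
    · exact hne.ne_empty h
    · exact NormedSpace.unbounded_univ ℝ _ (h ▸ hbdd)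
  apply Set.eq_of_subset_of_subset
  · -- forward inclusion
    intro x hx
    simp only [Set.mem_iUnion, hsurf, Set.mem_image] at hx
    obtain ⟨lam, hlam, θ, hθ, rfl⟩ := hx
    rcases eq_or_lt_of_le hlam.1 with h0 | h0
    · have : (1 - lam) • θ + lam • c = θ := by rw [← h0]; simp
      rw [this]
      exact frontier_subset_closure hθ
    · exact subset_closure (hstar θ (frontier_subset_closure hθ) lam ⟨h0, hlam.2⟩)
  · -- reverse inclusion
    intro t ht
    rcases eq_or_ne t c with rfl | htc
    · obtain ⟨θ, hθ⟩ := hfr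
      simp only [Set.mem_iUnion, hsurf, Set.mem_image]
      exact ⟨1, ⟨zero_le_one, le_refl 1⟩, θ, hθ, by simp⟩
    · -- ray from c through t
      set S : Set ℝ := {s : ℝ | 0 ≤ s ∧ c + s • (t - c) ∈ closure T} with hS
      have h1S : (1 : ℝ) ∈ S := by
        constructor
        · norm_num
        · simpa using ht
      have hSne : S.Nonempty := ⟨1, h1S⟩
      obtain ⟨R, hR⟩ := (hbdd.closure).subset_closedBall 0
      have hbdd' : BddAbove S := by
        refine ⟨(R + ‖c‖) / ‖t - c‖, ?_⟩
        intro s hs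
        have h1 : ‖c + s • (t - c)‖ ≤ R := by
          simpa using hR hs.2
        have h2 : ‖s • (t - c)‖ ≤ R + ‖c‖ := by
          calc ‖s • (t - c)‖ = ‖c + s • (t - c) - c‖ := by congr 1; abel
            _ ≤ ‖c + s • (t - c)‖ + ‖c‖ := norm_sub_le _ _
            _ ≤ R + ‖c‖ := by linarith
        have htc' : (0 : ℝ) < ‖t - c‖ := by
          rw [norm_pos_iff]; exact sub_ne_zero_of_ne htc
        rw [le_div_iff₀ htc']
        calc s * ‖t - c‖ ≤ |s| * ‖t - c‖ := by
              exact mul_le_mul_of_nonneg_right (le_abs_self s) (le_of_lt htc')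
          _ = ‖s • (t - c)‖ := (norm_smul s (t - c)).symm
          _ ≤ R + ‖c‖ := h2
      have hSclosed : IsClosed S := by
        have : S = Set.Ici (0:ℝ) ∩ (fun s : ℝ => c + s • (t - c)) ⁻¹' closure T := rfl
        rw [this]
        exact IsClosed.inter isClosed_Ici (IsClosed.preimage (continuous_const.add (continuous_id.smul continuous_const)) isClosed_closure)
      set s₀ := sSup S with hs₀
      have hmem : s₀ ∈ S := hSclosed.csSup_mem hSne hbdd'
      have hs₀1 : 1 ≤ s₀ := le_csSup hbdd' h1S
      have hs₀pos : 0 < s₀ := lt_of_lt_of_le one_pos hs₀1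
      set p := c + s₀ • (t - c) with hp
      have hpcl : p ∈ closure T := hmem.2
      -- p ∉ T
      have hpnT : p ∉ T := by
        intro hpT
        have hcont : Continuous (fun s : ℝ => c + s • (t - c)) := continuous_const.add (continuous_id.smul continuous_const)
        have : (fun s : ℝ => c + s • (t - c)) ⁻¹' T ∈ nhds s₀ :=
          hcont.continuousAt.preimage_mem_nhds (hopen.mem_nhds hpT)
        obtain ⟨ε, hε, hball⟩ := Metric.mem_nhds_iff.mp this
        have hin : s₀ + ε / 2 ∈ S := by
          constructor
          · linarith
          · apply subset_closure
            apply hball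
            rw [Metric.mem_ball, Real.dist_eq, show s₀ + ε / 2 - s₀ = ε / 2 by ring,
              abs_of_pos (by linarith)]
            linarith
        have := le_csSup hbdd' hin
        linarith
      have hpfr : p ∈ frontier T := by
        rw [frontier_eq_closure_inter_closure]
        exact ⟨hpcl, by rwa [hopen.isClosed_compl.closure_eq]⟩
      -- t = (1 - lam) • p + lam • c with lam = 1 - 1/s₀
      refine Set.mem_iUnion.mpr ⟨1 - 1 / s₀, Set.mem_iUnion.mpr ⟨?_, ?_⟩⟩
      · constructor
        · have : 1 / s₀ ≤ 1 := by
            rw [div_le_one hs₀pos]; exact hs₀1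
          linarith
        · have : 0 < 1 / s₀ := by positivity
          linarith
      · rw [hsurf]
        refine ⟨p, hpfr, ?_⟩
        show (1 - (1 - 1 / s₀)) • p + (1 - 1 / s₀) • c = t
        have hne₀ : s₀ ≠ 0 := ne_of_gt hs₀pos
        rw [hp]
        match_scalars <;> (field_simp; try ring)
end

section
/- Let n ≥ 1, K ≥ 1, let M₁, …, M_K be symmetric n×n real matrices and N₂, …, N_K be n×n real matrices, and let A be the (Kn)×(Kn) block tridiagonal matrix with diagonal blocks A_{k,k} = M_k, subdiagonal blocks A_{k,k−1} = −N_k, superdiagonal blocks A_{k−1,k} = −N_kᵀ, and all other blocks zero. Define S_K = M_K and, for k = K−1, …, 1, S_k = M_k − N_{k+1}ᵀ S_{k+1}⁻¹ N_{k+1}, and assume each S_k is invertible and symmetric. For each k let L_k be an n×n matrix with L_kᵀ L_k = S_k, and for k = 2, …, K set F_k = S_k⁻¹ N_k and P_k = L_k F_k. Let L be the (Kn)×(Kn) block matrix with diagonal blocks L_{k,k} = L_k, subdiagonal blocks L_{k,k−1} = −P_k, and all other blocks zero. Then Lᵀ L = A. -/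
open Matrix

private lemma sum_ite_eq_fin' {K : ℕ} (m : ℕ) (c : Fin K → ℝ) :
    (∑ j : Fin K, if (j : ℕ) = m then c j else 0) =
      if h : m < K then c ⟨m, h⟩ else 0 := by
  split_ifs with h
  · rw [Finset.sum_eq_single (⟨m, h⟩ : Fin K)]
    · simp
    · intro j _ hj
      rw [if_neg]
      intro hjm
      exact hj (Fin.ext hjm)
    · simp
  · apply Finset.sum_eq_zero
    intro j _
    rw [if_neg]
    intro hjm
    exact h (hjm ▸ j.isLt)

private lemma ite_ite_add' {c1 c2 : Prop} [Decidable c1] [Decidable c2] (h : c1 → ¬ c2)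
    (a b : ℝ) : (if c1 then a else if c2 then b else 0) =
      (if c1 then a else 0) + (if c2 then b else 0) := by
  split_ifs with h1 h2 <;> simp_all

private lemma sum_col_mul {n : ℕ} (X Y : Matrix (Fin n) (Fin n) ℝ) (x y : Fin n) :
    (∑ i, X i x * Y i y) = (Xᵀ * Y) x y := by
  simp [Matrix.mul_apply]

/-- Block Cholesky factorization of a block tridiagonal matrix along the Schur-complement
recursion (equations (cholesky_p)–(chol_2m) of the paper): with `S_{K-1} = M_{K-1}`,
`S_k = M_k - N_{k+1}ᵀ S_{k+1}⁻¹ N_{k+1}`, factors `L_kᵀ L_k = S_k`, `F_k = S_k⁻¹ N_k`,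
`P_k = L_k F_k` (blocks indexed `0, …, K-1`), the block lower bidiagonal matrix `𝓛` with
diagonal blocks `L_k` and subdiagonal blocks `-P_k` satisfies `𝓛ᵀ 𝓛 = A`. -/
theorem block_cholesky_factorization (n K : ℕ) (hn : 1 ≤ n) (hK : 1 ≤ K)
    (M N : ℕ → Matrix (Fin n) (Fin n) ℝ) (hM : ∀ k < K, (M k).IsSymm)
    (A : Matrix (Fin K × Fin n) (Fin K × Fin n) ℝ)
    (hA : ∀ p q : Fin K × Fin n, A p q =
      if (p.1 : ℕ) = (q.1 : ℕ) then M p.1 p.2 q.2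
      else if (q.1 : ℕ) + 1 = (p.1 : ℕ) then -(N p.1 p.2 q.2)
      else if (p.1 : ℕ) + 1 = (q.1 : ℕ) then -(N q.1 q.2 p.2)
      else 0)
    (S : ℕ → Matrix (Fin n) (Fin n) ℝ)
    (hSlast : S (K - 1) = M (K - 1))
    (hSrec : ∀ k, k + 1 < K → S k = M k - (N (k + 1))ᵀ * (S (k + 1))⁻¹ * N (k + 1))
    (hSsymm : ∀ k < K, (S k).IsSymm) (hSinv : ∀ k < K, IsUnit (S k).det)
    (L : ℕ → Matrix (Fin n) (Fin n) ℝ) (hL : ∀ k < K, (L k)ᵀ * L k = S k)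
    (F Pm : ℕ → Matrix (Fin n) (Fin n) ℝ)
    (hF : ∀ k, 1 ≤ k → k < K → F k = (S k)⁻¹ * N k)
    (hPm : ∀ k, 1 ≤ k → k < K → Pm k = L k * F k)
    (𝓛 : Matrix (Fin K × Fin n) (Fin K × Fin n) ℝ)
    (h𝓛 : ∀ p q : Fin K × Fin n, 𝓛 p q =
      if (p.1 : ℕ) = (q.1 : ℕ) then L p.1 p.2 q.2
      else if (q.1 : ℕ) + 1 = (p.1 : ℕ) then -(Pm p.1 p.2 q.2)
      else 0) :
    𝓛ᵀ * 𝓛 = A := by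
  -- matrix-level identities
  have hLtPm : ∀ k, 1 ≤ k → k < K → (L k)ᵀ * Pm k = N k := by
    intro k h1 h2
    rw [hPm k h1 h2, hF k h1 h2, ← Matrix.mul_assoc, ← Matrix.mul_assoc, hL k h2,
      Matrix.mul_nonsing_inv _ (hSinv k h2), Matrix.one_mul]
  have hPmtL : ∀ k, 1 ≤ k → k < K → (Pm k)ᵀ * L k = (N k)ᵀ := by
    intro k h1 h2
    have h := congrArg Matrix.transpose (hLtPm k h1 h2)
    rwa [Matrix.transpose_mul, Matrix.transpose_transpose] at h
  have hPmtPm : ∀ k, 1 ≤ k → k < K → (Pm k)ᵀ * Pm k = (N k)ᵀ * (S k)⁻¹ * N k := by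
    intro k h1 h2
    calc (Pm k)ᵀ * Pm k = (L k * F k)ᵀ * Pm k := by rw [← hPm k h1 h2]
      _ = (F k)ᵀ * ((L k)ᵀ * Pm k) := by rw [Matrix.transpose_mul, Matrix.mul_assoc]
      _ = (F k)ᵀ * N k := by rw [hLtPm k h1 h2]
      _ = ((S k)⁻¹ * N k)ᵀ * N k := by rw [hF k h1 h2]
      _ = (N k)ᵀ * (S k)⁻¹ * N k := by
          rw [Matrix.transpose_mul, Matrix.transpose_nonsing_inv, hSsymm k h2,
            Matrix.mul_assoc]
  ext p q
  obtain ⟨p1, p2⟩ := p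
  obtain ⟨q1, q2⟩ := q
  rw [hA, Matrix.mul_apply]
  simp only [Matrix.transpose_apply]
  rw [Fintype.sum_prod_type]
  by_cases h1 : (p1 : ℕ) = (q1 : ℕ)
  · -- diagonal block
    obtain rfl : p1 = q1 := Fin.ext h1
    rw [if_pos rfl]
    have hinner : ∀ j : Fin K, (∑ i, 𝓛 (j, i) (p1, p2) * 𝓛 (j, i) (p1, q2)) =
        if (j : ℕ) = (p1 : ℕ) then S p1 p2 q2
        else if (j : ℕ) = (p1 : ℕ) + 1 then ((N j)ᵀ * (S j)⁻¹ * N j) p2 q2 else 0 := by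
      intro j
      simp only [h𝓛]
      by_cases hj : (j : ℕ) = (p1 : ℕ)
      · simp only [hj, eq_self_iff_true, ite_true]
        have e : L (p1 : ℕ) = L (j : ℕ) := by rw [hj]
        rw [sum_col_mul, hL p1 p1.isLt]
      · simp only [if_neg hj]
        by_cases hj2 : (p1 : ℕ) + 1 = (j : ℕ)
        · simp only [if_pos hj2, if_pos hj2.symm]
          rw [show (∑ i, -Pm (↑j) i p2 * -Pm (↑j) i q2)
                = ∑ i, Pm (↑j) i p2 * Pm (↑j) i q2 by
            apply Finset.sum_congr rfl; intro i _; ring]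
          rw [sum_col_mul, hPmtPm j (by omega) j.isLt]
        · simp only [if_neg hj2, if_neg (show ¬ (j:ℕ) = (p1:ℕ) + 1 from fun h => hj2 h.symm)]
          simp
    rw [Finset.sum_congr rfl (fun j _ => hinner j)]
    have hsplit : ∀ j : Fin K,
        (if (j : ℕ) = (p1 : ℕ) then S p1 p2 q2
          else if (j : ℕ) = (p1 : ℕ) + 1 then ((N j)ᵀ * (S j)⁻¹ * N j) p2 q2 else 0) =
        (if (j : ℕ) = (p1 : ℕ) then S p1 p2 q2 else 0)
          + (if (j : ℕ) = (p1 : ℕ) + 1 then ((N j)ᵀ * (S j)⁻¹ * N j) p2 q2 else 0) := by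
      intro j
      exact ite_ite_add' (by omega) _ _
    rw [Finset.sum_congr rfl (fun j _ => hsplit j), Finset.sum_add_distrib,
      sum_ite_eq_fin', sum_ite_eq_fin', dif_pos p1.isLt]
    by_cases hlt : (p1 : ℕ) + 1 < K
    · rw [dif_pos hlt, hSrec p1 hlt]
      simp [Matrix.sub_apply]
    · rw [dif_neg hlt, add_zero]
      have hv : (p1 : ℕ) = K - 1 := by have := p1.isLt; omega
      rw [hv, hSlast]
  · rw [if_neg h1]
    by_cases h2 : (q1 : ℕ) + 1 = (p1 : ℕ)
    · -- subdiagonal block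
      rw [if_pos h2]
      have hinner : ∀ j : Fin K, (∑ i, 𝓛 (j, i) (p1, p2) * 𝓛 (j, i) (q1, q2)) =
          if (j : ℕ) = (p1 : ℕ) then -(N p1 p2 q2) else 0 := by
        intro j
        simp only [h𝓛]
        by_cases hj : (j : ℕ) = (p1 : ℕ)
        · simp only [hj, eq_self_iff_true, ite_true, if_neg h1, if_pos h2]
          rw [show (∑ i, L (↑p1) i p2 * -Pm (↑p1) i q2)
                = -∑ i, L (↑p1) i p2 * Pm (↑p1) i q2 by
            rw [← Finset.sum_neg_distrib]; apply Finset.sum_congr rfl; intro i _; ring]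
          rw [sum_col_mul, hLtPm p1 (by omega) p1.isLt]
        · simp only [if_neg hj]
          apply Finset.sum_eq_zero
          intro i _
          split_ifs <;> first | omega | ring
      rw [Finset.sum_congr rfl (fun j _ => hinner j), sum_ite_eq_fin', dif_pos p1.isLt]
    · rw [if_neg h2]
      by_cases h3 : (p1 : ℕ) + 1 = (q1 : ℕ)
      · -- superdiagonal block
        rw [if_pos h3]
        have hinner : ∀ j : Fin K, (∑ i, 𝓛 (j, i) (p1, p2) * 𝓛 (j, i) (q1, q2)) =
            if (j : ℕ) = (q1 : ℕ) then -(N q1 q2 p2) else 0 := by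
          intro j
          simp only [h𝓛]
          by_cases hj : (j : ℕ) = (q1 : ℕ)
          · simp only [hj, eq_self_iff_true, ite_true,
              if_neg (show ¬ (q1:ℕ) = (p1:ℕ) from fun h => h1 h.symm), if_pos h3]
            rw [show (∑ i, -Pm (↑q1) i p2 * L (↑q1) i q2)
                  = -∑ i, Pm (↑q1) i p2 * L (↑q1) i q2 by
              rw [← Finset.sum_neg_distrib]; apply Finset.sum_congr rfl; intro i _; ring]
            rw [sum_col_mul, hPmtL q1 (by omega) q1.isLt]
            simp [Matrix.transpose_apply]
          · simp only [if_neg hj]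
            apply Finset.sum_eq_zero
            intro i _
            split_ifs <;> first | omega | ring
        rw [Finset.sum_congr rfl (fun j _ => hinner j), sum_ite_eq_fin', dif_pos q1.isLt]
      · -- far off-diagonal
        rw [if_neg h3]
        apply Finset.sum_eq_zero
        intro j _
        apply Finset.sum_eq_zero
        intro i _
        simp only [h𝓛]
        split_ifs <;> first | omega | ring
end
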